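/- arXiv:1711.09479 — 2 statements merged into one kernel-verified Lean document; each statement's English description precedes it below -/
import Mathlib

section
/- Let φ ∈ Hol(𝔻) ∩ C¹(closed 𝔻) with boundary zero set E ⊂ 𝕋. Then the map λ ↦ φ/(z − λ), from E to L²(𝕋), is continuous; i.e., if μ → λ with μ, λ ∈ E, then ‖φ/(z − μ) − φ/(z − λ)‖_{L²(𝕋)} → 0. -/
open MeasureTheory Metric Complex Filter Bornology

/-- The point `e^{iθ}` on the unit circle. -/
noncomputable def circPt (θ : ℝ) : ℂ := Complex.exp (θ * Complex.I)

/-- Membership in the Hardy space `H²` encoded via boundary Fourier series with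
nonnegative frequencies and square-summable coefficients. -/
def HardyPlus (g : ℂ → ℂ) : Prop :=
  ∃ c : ℕ → ℂ, Summable (fun n => ‖c n‖ ^ 2) ∧
    ∀ z : ℂ, ‖z‖ = 1 → HasSum (fun n => c n * z ^ (n : ℕ)) (g z)

/-- Membership in `H²₋ = conj (z H²)` encoded via boundary Fourier series with
negative frequencies and square-summable coefficients. -/
def HardyMinus (g : ℂ → ℂ) : Prop :=
  ∃ c : ℕ → ℂ, Summable (fun n => ‖c n‖ ^ 2) ∧
    ∀ z : ℂ, ‖z‖ = 1 → HasSum (fun n => c n * z ^ (-(n : ℤ) - 1)) (g z)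

/-- The mean value of `f` over the unit circle (equal to `f(0)` for the
holomorphic extension of a nice function). -/
noncomputable def meanVal (f : ℂ → ℂ) : ℂ :=
  (2 * Real.pi : ℂ)⁻¹ * ∫ θ in (0:ℝ)..(2 * Real.pi), f (circPt θ)

/-- The backward shift `S* f(z) = (f(z) - f(0)) / z`, with `f(0)` realized as the
circle mean of `f`. -/
noncomputable def Sstar (f : ℂ → ℂ) : ℂ → ℂ := fun z => (f z - meanVal f) / z

/-- The squared `H_*` norm `‖f φ‖²_{L²(𝕋)}`. -/
noncomputable def N2 (φ f : ℂ → ℂ) : ℝ :=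
  ∫ θ in (0:ℝ)..(2 * Real.pi), ‖f (circPt θ) * φ (circPt θ)‖ ^ 2

/-- The space `H_*(φ, ψ) = {f : f φ ∈ H², f ⬝ conj ψ ∈ H²₋}`. -/
def Hstar (φ ψ : ℂ → ℂ) : Set (ℂ → ℂ) :=
  {f | HardyPlus (fun z => f z * φ z) ∧
       HardyMinus (fun z => f z * (starRingEnd ℂ) (ψ z))}

/-- The Cauchy kernel `1 / (z - λ)`. -/
noncomputable def cauchyKer (l : ℂ) : ℂ → ℂ := fun z => (z - l)⁻¹

/-- `H₀`: the closed span, in the `H_*`-norm, of the Cauchy kernels at the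
points `Λ j`. -/
def H0 (φ : ℂ → ℂ) (Λ : ℕ → ℂ) : Set (ℂ → ℂ) :=
  {f | f ∈ Hstar φ φ ∧
    ∀ ε > (0:ℝ), ∃ (n : ℕ) (c : Fin n → ℂ) (k : Fin n → ℕ),
      N2 φ (fun z => f z - ∑ i, c i * cauchyKer (Λ (k i)) z) < ε}

/-
Being C¹ on the compact convex closed disk, `φ` is `K`-Lipschitz there, so for every zero `μ` of
`φ` in the disk `|φ(z) / (z - μ)| = |φ(z) - φ(μ)| / |z - μ| ≤ K`. The integrands are therefore
bounded by `(2K)²` uniformly in `μ ∈ E`, and for each fixed `z` they tend to `0` as `μ → λ`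
(at `z = λ` they vanish identically because `φ(λ) = 0`), so dominated convergence applies.
-/

open Topology

theorem ContDiffOn.exists_lipschitzOnWith_of_convex_of_isCompact {E F : Type*}
    [NormedAddCommGroup E] [NormedSpace ℝ E] [NormedAddCommGroup F] [NormedSpace ℝ F]
    {f : E → F} {s : Set E} (hf : ContDiffOn ℝ 1 f s) (hconv : Convex ℝ s)
    (hint : (interior s).Nonempty) (hcpt : IsCompact s) :
    ∃ K, LipschitzOnWith K f s := by
  have hcont : ContinuousOn (fderivWithin ℝ f s) s :=
    hf.continuousOn_fderivWithin (uniqueDiffOn_convex hconv hint) le_rfl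
  obtain ⟨C, hC⟩ := hcpt.exists_bound_of_continuousOn hcont
  refine ⟨C.toNNReal, hconv.lipschitzOnWith_of_nnnorm_fderivWithin_le
    (hf.differentiableOn one_ne_zero) fun x hx => ?_⟩
  rw [← NNReal.coe_le_coe]
  exact (hC x hx).trans (Real.le_coe_toNNReal C)

section DivSubZero

variable {𝕜 : Type*} [RCLike 𝕜] {f : 𝕜 → 𝕜}

theorem LipschitzOnWith.norm_div_sub_le_of_apply_eq_zero {K : NNReal} {s : Set 𝕜}
    (hf : LipschitzOnWith K f s) {a x : 𝕜} (ha : a ∈ s) (hx : x ∈ s) (hfa : f a = 0) :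
    ‖f x / (x - a)‖ ≤ K := by
  rcases eq_or_ne x a with rfl | hxa
  · simp [hfa]
  rw [norm_div, div_le_iff₀ (norm_pos_iff.2 (sub_ne_zero.2 hxa)), ← dist_eq_norm,
    ← dist_zero_right, ← hfa]
  exact hf.dist_le_mul x hx a ha

theorem tendsto_div_sub_of_apply_eq_zero {a : 𝕜} (hfa : f a = 0) (x : 𝕜) :
    Tendsto (fun b => f x / (x - b)) (𝓝 a) (𝓝 (f x / (x - a))) := by
  rcases eq_or_ne x a with rfl | hxa
  · simp [hfa]
  exact continuousAt_const.div (continuousAt_const.sub continuousAt_id) (sub_ne_zero.2 hxa)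

theorem LipschitzOnWith.tendsto_integral_norm_div_sub_sq {α : Type*} [TopologicalSpace α]
    [MeasurableSpace α] [OpensMeasurableSpace α] (ν : Measure α) [IsFiniteMeasure ν]
    {K : NNReal} {s : Set 𝕜} (hf : LipschitzOnWith K f s) {γ : α → 𝕜} (hγ : Continuous γ)
    (hγs : ∀ t, γ t ∈ s) {a : 𝕜} (ha : a ∈ s) (hfa : f a = 0) :
    Tendsto (fun b => ∫ t, ‖f (γ t) / (γ t - b) - f (γ t) / (γ t - a)‖ ^ 2 ∂ν)
      (𝓝[{z ∈ s | f z = 0}] a) (𝓝 0) := by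
  have hfγ : Continuous (f ∘ γ) := hf.continuousOn.comp_continuous hγ hγs
  have hbound : ∀ b ∈ {z ∈ s | f z = 0}, ∀ t,
      ‖f (γ t) / (γ t - b) - f (γ t) / (γ t - a)‖ ≤ 2 * K := fun b hb t =>
    calc _ ≤ ‖f (γ t) / (γ t - b)‖ + ‖f (γ t) / (γ t - a)‖ := _root_.norm_sub_le _ _
      _ ≤ K + K := add_le_add (hf.norm_div_sub_le_of_apply_eq_zero hb.1 (hγs t) hb.2)
          (hf.norm_div_sub_le_of_apply_eq_zero ha (hγs t) hfa)
      _ = 2 * K := (two_mul _).symm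
  have hmeas : ∀ b, AEStronglyMeasurable
      (fun t => ‖f (γ t) / (γ t - b) - f (γ t) / (γ t - a)‖ ^ 2) ν := fun b =>
    ((hfγ.measurable.div (hγ.measurable.sub_const b)).sub
      (hfγ.measurable.div (hγ.measurable.sub_const a))).norm.pow_const 2 |>.aestronglyMeasurable
  have hdom : ∀ᶠ b in 𝓝[{z ∈ s | f z = 0}] a, ∀ᵐ t ∂ν,
      ‖‖f (γ t) / (γ t - b) - f (γ t) / (γ t - a)‖ ^ 2‖ ≤ (2 * K : ℝ) ^ 2 := by
    filter_upwards [self_mem_nhdsWithin] with b hb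
    refine ae_of_all _ fun t => ?_
    rw [Real.norm_of_nonneg (by positivity)]
    exact pow_le_pow_left₀ (norm_nonneg _) (hbound b hb t) 2
  have hlim : ∀ᵐ t ∂ν, Tendsto (fun b => ‖f (γ t) / (γ t - b) - f (γ t) / (γ t - a)‖ ^ 2)
      (𝓝[{z ∈ s | f z = 0}] a) (𝓝 0) := ae_of_all _ fun t => by
    simpa using (((tendsto_div_sub_of_apply_eq_zero hfa (γ t)).sub_const
      (f (γ t) / (γ t - a))).norm.pow 2).mono_left nhdsWithin_le_nhds
  simpa using tendsto_integral_filter_of_dominated_convergence _ (.of_forall hmeas) hdom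
    (integrable_const _) hlim

end DivSubZero

theorem continuous_circPt : Continuous circPt :=
  Complex.continuous_exp.comp (continuous_ofReal.mul continuous_const)

theorem circPt_mem_closedBall (θ : ℝ) : circPt θ ∈ closedBall (0:ℂ) 1 := by
  simp [circPt, Complex.norm_exp_ofReal_mul_I]

theorem stmt2_general (φ : ℂ → ℂ)
    (hsm : ContDiffOn ℝ 1 φ (closedBall (0:ℂ) 1))
    (E : Set ℂ) (hE : E = {z : ℂ | ‖z‖ = 1 ∧ φ z = 0}) :
    ∀ lam ∈ E, Filter.Tendsto
      (fun μ : ℂ => ∫ θ in (0:ℝ)..(2 * Real.pi),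
        ‖φ (circPt θ) / (circPt θ - μ) - φ (circPt θ) / (circPt θ - lam)‖ ^ 2)
      (nhdsWithin lam E) (nhds 0) := by
  obtain ⟨K, hK⟩ := hsm.exists_lipschitzOnWith_of_convex_of_isCompact (convex_closedBall 0 1)
    (by simp [interior_closedBall]) (isCompact_closedBall 0 1)
  subst hE
  have hE_sub : {z : ℂ | ‖z‖ = 1 ∧ φ z = 0} ⊆ {z ∈ closedBall (0:ℂ) 1 | φ z = 0} :=
    fun z hz => ⟨by simp [hz.1], hz.2⟩
  intro lam hlam
  simp only [intervalIntegral.integral_of_le Real.two_pi_pos.le]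
  exact (hK.tendsto_integral_norm_div_sub_sq _ continuous_circPt circPt_mem_closedBall
    (hE_sub hlam).1 hlam.2).mono_left (nhdsWithin_mono _ hE_sub)

/-- the map `λ ↦ φ/(z-λ)` from the boundary zero set `E` of `φ`
to `L²(𝕋)` is continuous. -/
theorem stmt2 (φ : ℂ → ℂ)
    (hhol : DifferentiableOn ℂ φ (ball (0:ℂ) 1))
    (hsm : ContDiffOn ℝ 1 φ (closedBall (0:ℂ) 1))
    (E : Set ℂ) (hE : E = {z : ℂ | ‖z‖ = 1 ∧ φ z = 0}) :
    ∀ lam ∈ E, Filter.Tendsto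
      (fun μ : ℂ => ∫ θ in (0:ℝ)..(2 * Real.pi),
        ‖φ (circPt θ) / (circPt θ - μ) - φ (circPt θ) / (circPt θ - lam)‖ ^ 2)
      (nhdsWithin lam E) (nhds 0) :=
  stmt2_general φ hsm E hE
end

section
/- A hypercyclic bounded operator T on a complex Banach space X of dimension ≥ 1 cannot be of the form I + R with R of finite rank, since the adjoint of I + R has an eigenvalue, and a hypercyclic operator's adjoint has no eigenvalues. -/
open MeasureTheory Metric Complex Filter Bornology

/-! If `T` has a dense orbit and `f ∘ T = μ f` for a nonzero functional `f`, then `f` maps the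
orbit of `x` onto the geometric sequence `μ ^ n * f x`, which would have to be dense in `ℂ`; it
never is. For `T = 1 + R` such an `f` exists: if `R` is not onto, its finite-dimensional range is
a proper closed subspace and any `f ≠ 0` vanishing on it satisfies `f ∘ T = f`; if `R` is onto,
`X` is finite-dimensional and `f` comes from an eigenvalue `μ` of `T` through the proper
subspace `range (T - μ)`. -/

theorem not_dense_range_geometric {𝕜 : Type*} [NontriviallyNormedField 𝕜] (μ c : 𝕜) :
    ¬ Dense (Set.range fun n : ℕ => μ ^ n * c) := by
  intro h
  have univ_of_subset_closed : ∀ s : Set 𝕜, IsClosed s →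
      (∀ n : ℕ, μ ^ n * c ∈ s) → s = Set.univ := fun s hs hsub =>
    (h.mono (Set.range_subset_iff.2 hsub)).closure_eq ▸ hs.closure_eq.symm
  by_cases hbdd : ‖μ‖ ≤ 1 ∨ c = 0
  · have hball := univ_of_subset_closed (closedBall 0 ‖c‖) isClosed_closedBall fun n => by
      rw [mem_closedBall_zero_iff, norm_mul, norm_pow]
      rcases hbdd with hμ | rfl
      · exact mul_le_of_le_one_left (norm_nonneg c) (pow_le_one₀ (norm_nonneg μ) hμ)
      · simp
    obtain ⟨z, hz⟩ := NormedField.exists_lt_norm 𝕜 ‖c‖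
    have : z ∈ closedBall (0 : 𝕜) ‖c‖ := hball ▸ Set.mem_univ z
    exact (mem_closedBall_zero_iff.1 this).not_gt hz
  · rw [not_or, not_le] at hbdd
    have hout := univ_of_subset_closed {z | ‖c‖ ≤ ‖z‖}
      (isClosed_le continuous_const continuous_norm) fun n => by
        simp only [Set.mem_ofPred_eq, norm_mul, norm_pow]
        exact le_mul_of_one_le_left (norm_nonneg c) (one_le_pow₀ hbdd.1.le)
    have : (0 : 𝕜) ∈ {z : 𝕜 | ‖c‖ ≤ ‖z‖} := hout ▸ Set.mem_univ 0
    simp [hbdd.2] at this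

section Orbit

variable {𝕜 X : Type*} [NontriviallyNormedField 𝕜] [AddCommGroup X] [Module 𝕜 X]
  [TopologicalSpace X]

theorem StrongDual.comp_pow_eq_pow_smul {T : X →L[𝕜] X} {f : StrongDual 𝕜 X} {μ : 𝕜}
    (hf : f.comp T = μ • f) (n : ℕ) : f.comp (T ^ n) = μ ^ n • f := by
  induction n with
  | zero => rw [pow_zero, pow_zero, one_smul]; exact f.comp_id
  | succ n ih =>
    rw [pow_succ, ContinuousLinearMap.mul_def, ← ContinuousLinearMap.comp_assoc, ih,
      ContinuousLinearMap.smul_comp, hf, smul_smul, pow_succ]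

theorem ContinuousLinearMap.not_dense_orbit_of_strongDual_comp_eq_smul {T : X →L[𝕜] X}
    {f : StrongDual 𝕜 X} {μ : 𝕜} (hf₀ : f ≠ 0) (hf : f.comp T = μ • f) (x : X) :
    ¬ Dense (Set.range fun n : ℕ => (T ^ n) x) := by
  intro hx
  have hsurj : Function.Surjective f := by
    obtain ⟨y, hy⟩ : ∃ y, f y ≠ 0 := by
      by_contra! h
      exact hf₀ (ContinuousLinearMap.ext h)
    intro u
    exact ⟨(u / f y) • y, by simp [div_mul_cancel₀ _ hy]⟩
  have himage : f '' Set.range (fun n : ℕ => (T ^ n) x) =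
      Set.range fun n : ℕ => μ ^ n * f x := by
    rw [← Set.range_comp]
    congr 1
    ext n
    simpa using congr($(StrongDual.comp_pow_eq_pow_smul hf n) x)
  exact not_dense_range_geometric μ (f x) (himage ▸ hsurj.denseRange.dense_image f.continuous hx)

end Orbit

section HahnBanach

variable {𝕜 X : Type*} [RCLike 𝕜] [NormedAddCommGroup X] [NormedSpace 𝕜 X]

theorem Submodule.exists_strongDual_ne_zero_forall_mem_eq_zero {W : Submodule 𝕜 X}
    (hW : IsClosed (W : Set X)) (hW_ne_top : W ≠ ⊤) :
    ∃ f : StrongDual 𝕜 X, f ≠ 0 ∧ ∀ w ∈ W, f w = 0 := by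
  have : Nontrivial (X ⧸ W) := Submodule.Quotient.nontrivial_iff.2 hW_ne_top
  obtain ⟨q, hq⟩ := exists_ne (0 : X ⧸ W)
  obtain ⟨g, -, hgq⟩ := exists_dual_vector 𝕜 q (norm_ne_zero_iff.2 hq)
  obtain ⟨x, rfl⟩ := W.mkQ_surjective q
  refine ⟨g.comp W.mkQL, fun h => hq ?_, fun w hw => ?_⟩
  · have hgx : g (W.mkQ x) = 0 := congr($h x)
    rw [← norm_eq_zero, ← RCLike.ofReal_eq_zero (K := 𝕜), ← hgq, ← hgx]
  · simp [(Submodule.Quotient.mk_eq_zero W).2 hw]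

theorem ContinuousLinearMap.exists_strongDual_comp_eq_smul (T : X →L[𝕜] X) (μ : 𝕜)
    (hclosed : IsClosed (LinearMap.range ((T : X →ₗ[𝕜] X) - μ • 1) : Set X))
    (hne_top : LinearMap.range ((T : X →ₗ[𝕜] X) - μ • 1) ≠ ⊤) :
    ∃ f : StrongDual 𝕜 X, f ≠ 0 ∧ f.comp T = μ • f := by
  obtain ⟨f, hf₀, hker⟩ := Submodule.exists_strongDual_ne_zero_forall_mem_eq_zero hclosed hne_top
  refine ⟨f, hf₀, ContinuousLinearMap.ext fun x => ?_⟩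
  have := hker _ (LinearMap.mem_range_self _ x)
  simp_all [sub_eq_zero]

end HahnBanach

section Complex

variable {X : Type*} [NormedAddCommGroup X] [NormedSpace ℂ X] [Nontrivial X]

theorem ContinuousLinearMap.exists_strongDual_comp_eq_smul_of_finiteDimensional
    [FiniteDimensional ℂ X] (T : X →L[ℂ] X) :
    ∃ (f : StrongDual ℂ X) (μ : ℂ), f ≠ 0 ∧ f.comp T = μ • f := by
  obtain ⟨μ, hμ⟩ := Module.End.exists_eigenvalue (T : X →ₗ[ℂ] X)
  have hne_top : LinearMap.range ((T : X →ₗ[ℂ] X) - μ • 1) ≠ ⊤ := by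
    rwa [Module.End.hasEigenvalue_iff, Module.End.eigenspace_def, Ne, LinearMap.ker_eq_bot,
      LinearMap.injective_iff_surjective, ← LinearMap.range_eq_top] at hμ
  obtain ⟨f, hf⟩ :=
    T.exists_strongDual_comp_eq_smul μ (Submodule.closed_of_finiteDimensional _) hne_top
  exact ⟨f, μ, hf⟩

theorem ContinuousLinearMap.exists_strongDual_comp_one_add_eq_smul (R : X →L[ℂ] X)
    (hR : FiniteDimensional ℂ (LinearMap.range (R : X →ₗ[ℂ] X))) :
    ∃ (f : StrongDual ℂ X) (μ : ℂ), f ≠ 0 ∧ f.comp (1 + R) = μ • f := by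
  by_cases htop : LinearMap.range (R : X →ₗ[ℂ] X) = ⊤
  · rw [htop] at hR
    have : FiniteDimensional ℂ X := Module.Finite.equiv Submodule.topEquiv
    exact (1 + R).exists_strongDual_comp_eq_smul_of_finiteDimensional
  · have hrange : LinearMap.range (((1 + R : X →L[ℂ] X) : X →ₗ[ℂ] X) - (1 : ℂ) • 1) =
        LinearMap.range (R : X →ₗ[ℂ] X) := by
      congr 1
      ext x
      simp
    obtain ⟨f, hf⟩ := (1 + R).exists_strongDual_comp_eq_smul 1
      (hrange ▸ Submodule.closed_of_finiteDimensional _) (hrange ▸ htop)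
    exact ⟨f, 1, hf⟩

end Complex

theorem stmt13_general (X : Type) [NormedAddCommGroup X] [NormedSpace ℂ X]
    [Nontrivial X]
    (R : X →L[ℂ] X)
    (hR : FiniteDimensional ℂ (LinearMap.range (R : X →ₗ[ℂ] X))) :
    ¬ ∃ x : X, Dense (Set.range fun n : ℕ => (((1 : X →L[ℂ] X) + R) ^ n) x) := by
  rintro ⟨x, hx⟩
  obtain ⟨f, μ, hf₀, hf⟩ := R.exists_strongDual_comp_one_add_eq_smul hR
  exact ContinuousLinearMap.not_dense_orbit_of_strongDual_comp_eq_smul hf₀ hf x hx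

/-- an operator of the form `I + R` with `R` of finite rank is never
hypercyclic on a complex Banach space of dimension ≥ 1. -/
theorem stmt13 (X : Type) [NormedAddCommGroup X] [NormedSpace ℂ X]
    [CompleteSpace X] [Nontrivial X]
    (R : X →L[ℂ] X)
    (hR : FiniteDimensional ℂ (LinearMap.range (R : X →ₗ[ℂ] X))) :
    ¬ ∃ x : X, Dense (Set.range fun n : ℕ => (((1 : X →L[ℂ] X) + R) ^ n) x) :=
  stmt13_general X R hR
end
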